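/- arXiv:math/9901057 — 3 statements merged into one kernel-verified Lean document; each statement's English description precedes it below -/
import Mathlib

section
/- Let j ≤ i in I_{d,n}, let s_q = #{p : i_q < j_p}, and suppose for some q that i_q ∉ {j_1,…,j_d} and i_q - 1 > i_{q-1} (with the convention i_0 = 0). Then k := i - e_q lies in I_{d,n}, satisfies j ≤ k, and the vector s computed from (j, k) equals the vector s computed from (j, i). -/
/-- `s_q = #{p : i_q < j_p}`. -/
def sVec {d : ℕ} (j i : Fin d → ℕ) (q : Fin d) : ℕ :=
  (Finset.univ.filter fun p : Fin d => i q < j p).card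

/-- Case 1: if `i_q ∉ {j_1,…,j_d}` and `i_q - 1 > i_{q-1}` (with `i_0 = 0`),
then `k = i - e_q` lies in `I_{d,n}`, `j ≤ k`, and the `s`-vector is unchanged. -/
theorem decrement_case_one {d n : ℕ} (j i : Fin d → ℕ)
    (hj : StrictMono j) (hi : StrictMono i)
    (hj1 : ∀ q, 1 ≤ j q) (hin : ∀ q, i q ≤ n) (hji : ∀ q, j q ≤ i q)
    (q : Fin d) (hnot : ∀ p, j p ≠ i q)
    (h1 : 1 < i q) (hgap : ∀ p, p < q → i p < i q - 1) :
    StrictMono (Function.update i q (i q - 1)) ∧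
    (∀ r, 1 ≤ Function.update i q (i q - 1) r ∧ Function.update i q (i q - 1) r ≤ n) ∧
    (∀ r, j r ≤ Function.update i q (i q - 1) r) ∧
    (∀ r, sVec j (Function.update i q (i q - 1)) r = sVec j i r) := by
  refine ⟨?_, ?_, ?_, ?_⟩
  · intro a b hab
    rcases eq_or_ne q a with rfl | ha <;> rcases eq_or_ne q b with rfl | hb
    · exact absurd hab (lt_irrefl _)
    · simp only [Function.update_self, Function.update_of_ne (Ne.symm hb)]
      have := hi hab; omega
    · simp only [Function.update_self, Function.update_of_ne (Ne.symm ha)]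
      exact hgap a hab
    · simpa [Function.update_of_ne (Ne.symm ha), Function.update_of_ne (Ne.symm hb)] using hi hab
  · intro r
    rcases eq_or_ne r q with rfl | hr
    · simp only [Function.update_self]; constructor <;> [omega; exact le_trans (Nat.sub_le _ _) (hin r)]
    · simp only [Function.update_of_ne hr]
      exact ⟨le_trans (hj1 r) (hji r), hin r⟩
  · intro r
    rcases eq_or_ne r q with rfl | hr
    · simp only [Function.update_self]
      have := hji r; have := hnot r; omega
    · simp [Function.update_of_ne hr, hji r]
  · intro r
    rcases eq_or_ne r q with rfl | hr
    · unfold sVec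
      simp only [Function.update_self]
      congr 1
      apply Finset.filter_congr
      intro p _
      have := hnot p
      omega
    · unfold sVec
      rw [Function.update_of_ne hr]
end

section
/- Let j ≤ i in I_{d,n}, s_q = #{p : i_q < j_p}, and suppose for some q that i_q ∈ {j_{q+1},…,j_d} and i_q - 1 > i_{q-1}. Then k := i - e_q lies in I_{d,n} with j ≤ k, and the s-vector computed from (j, k) equals s + e_q. -/
/-- Case 3: if `i_q ∈ {j_{q+1},…,j_d}` and `i_q - 1 > i_{q-1}` (with `i_0 = 0`),
then `k = i - e_q` lies in `I_{d,n}`, `j ≤ k`, and the `s`-vector becomes `s + e_q`. -/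
theorem decrement_case_three {d n : ℕ} (j i : Fin d → ℕ)
    (hj : StrictMono j) (hi : StrictMono i)
    (hj1 : ∀ q, 1 ≤ j q) (hin : ∀ q, i q ≤ n) (hji : ∀ q, j q ≤ i q)
    (q : Fin d) (hmem : ∃ p, q < p ∧ j p = i q)
    (h1 : 1 < i q) (hgap : ∀ p, p < q → i p < i q - 1) :
    StrictMono (Function.update i q (i q - 1)) ∧
    (∀ r, 1 ≤ Function.update i q (i q - 1) r ∧ Function.update i q (i q - 1) r ≤ n) ∧
    (∀ r, j r ≤ Function.update i q (i q - 1) r) ∧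
    (∀ r, sVec j (Function.update i q (i q - 1)) r
        = sVec j i r + if r = q then 1 else 0) := by
  obtain ⟨p₀, hqp₀, hjp₀⟩ := hmem
  have hjq : j q < i q := lt_of_lt_of_le (hj hqp₀) (le_of_eq hjp₀)
  have hkq : Function.update i q (i q - 1) q = i q - 1 := Function.update_self _ _ _
  have hkr : ∀ r, r ≠ q → Function.update i q (i q - 1) r = i r :=
    fun r h => Function.update_of_ne h _ _
  refine ⟨?_, ?_, ?_, ?_⟩
  · intro a b hab
    rcases eq_or_ne a q with ha | ha
    · have hb : b ≠ q := by rintro rfl; exact absurd (ha ▸ hab) (lt_irrefl _)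
      rw [ha, hkq, hkr b hb]
      have := hi (ha ▸ hab)
      omega
    · rcases eq_or_ne b q with hb | hb
      · rw [hb, hkq, hkr a ha]
        exact hgap a (hb ▸ hab)
      · rw [hkr a ha, hkr b hb]
        exact hi hab
  · intro r
    rcases eq_or_ne r q with h | h
    · rw [h, hkq]
      exact ⟨by omega, le_trans (Nat.sub_le _ _) (hin q)⟩
    · rw [hkr r h]
      exact ⟨le_trans (hj1 r) (hji r), hin r⟩
  · intro r
    rcases eq_or_ne r q with h | h
    · rw [h, hkq]; omega
    · rw [hkr r h]; exact hji r
  · intro r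
    rcases eq_or_ne r q with h | h
    · rw [h, if_pos rfl]
      show (Finset.univ.filter fun p : Fin d => Function.update i q (i q - 1) q < j p).card
          = (Finset.univ.filter fun p : Fin d => i q < j p).card + 1
      rw [hkq]
      have hset : (Finset.univ.filter fun p : Fin d => i q - 1 < j p)
          = insert p₀ (Finset.univ.filter fun p : Fin d => i q < j p) := by
        ext p
        simp only [Finset.mem_filter, Finset.mem_univ, true_and, Finset.mem_insert]
        constructor
        · intro hp
          rcases lt_or_eq_of_le (show i q ≤ j p by omega) with h' | h'
          · exact Or.inr h'
          · exact Or.inl (hj.injective (by omega))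
        · rintro (rfl | hp) <;> omega
      rw [hset, Finset.card_insert_of_notMem]
      simp only [Finset.mem_filter, Finset.mem_univ, true_and]
      omega
    · rw [if_neg h, add_zero]
      show (Finset.univ.filter fun p : Fin d => Function.update i q (i q - 1) r < j p).card = _
      rw [hkr r h]
      rfl
end

section
/- For any j ≤ i in I_{d,n}, the value (-1)^{s_1+⋯+s_d} det[(C(i_q, p-1-s_q))_{1≤p,q≤d}], with s_q = #{p : i_q < j_p}, is a positive integer. -/
/-- The binomial coefficient `C(t, k)` for integer arguments, zero for `k < 0`. -/
noncomputable def intChoose (t k : ℤ) : ℚ :=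
  if 0 ≤ k then (∏ m ∈ Finset.range k.toNat, ((t : ℚ) - m)) / (Nat.factorial k.toNat) else 0

namespace SchubertAux


/-- integer binomial, ℤ-valued -/
def chZ (m : ℕ) (k : ℤ) : ℤ := if 0 ≤ k then (m.choose k.toNat : ℤ) else 0

noncomputable def ch (m : ℕ) (k : ℤ) : ℚ := ((chZ m k : ℤ) : ℚ)

lemma ch_of_neg {m : ℕ} {k : ℤ} (h : k < 0) : ch m k = 0 := by
  simp [ch, chZ, not_le.mpr h]

lemma ch_of_nonneg {m : ℕ} {k : ℤ} (h : 0 ≤ k) : ch m k = (m.choose k.toNat : ℚ) := by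
  simp [ch, chZ, h]

lemma ch_zero_right (m : ℕ) : ch m 0 = 1 := by simp [ch, chZ]

lemma ch_zero_left (k : ℤ) : ch 0 k = if k = 0 then 1 else 0 := by
  rcases lt_or_ge k 0 with h | h
  · rw [ch_of_neg h, if_neg (by omega)]
  · rw [ch_of_nonneg h]
    rcases eq_or_lt_of_le h with h0 | h0
    · simp [← h0]
    · rw [if_neg (by omega), Nat.choose_eq_zero_of_lt (by omega)]
      simp

lemma ch_pascal (m : ℕ) (k : ℤ) : ch (m+1) k = ch m k + ch m (k-1) := by
  rcases lt_or_ge k 0 with h | h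
  · rw [ch_of_neg h, ch_of_neg h, ch_of_neg (by omega)]; ring
  · rcases eq_or_lt_of_le h with h0 | h0
    · rw [← h0]
      rw [ch_zero_right, ch_zero_right, ch_of_neg (by omega)]; ring
    · rw [ch_of_nonneg h, ch_of_nonneg (by omega), ch_of_nonneg (by omega)]
      have h1 : k.toNat = (k-1).toNat + 1 := by omega
      rw [h1, Nat.choose_succ_succ]
      push_cast; ring

lemma prod_range_cast_descFactorial (t : ℕ) : ∀ n : ℕ,
    (∏ m ∈ Finset.range n, ((t : ℚ) - m)) = (t.descFactorial n : ℚ)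
  | 0 => by simp
  | (n+1) => by
      rw [Finset.prod_range_succ, prod_range_cast_descFactorial t n, Nat.descFactorial_succ]
      rcases lt_or_ge n t with h | h
      · push_cast [Nat.cast_sub (by omega : n ≤ t)]
        ring
      · rcases eq_or_lt_of_le h with h2 | h2
        · subst h2
          rw [Nat.sub_self]
          push_cast
          ring
        · rw [Nat.descFactorial_eq_zero_iff_lt.mpr h2]
          push_cast; ring

lemma intChoose_natCast (t : ℕ) (k : ℤ) : intChoose (t : ℤ) k = ch t k := by
  rcases lt_or_ge k 0 with h | h
  · rw [intChoose, if_neg (not_le.mpr h), ch_of_neg h]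
  · rw [intChoose, if_pos h, ch_of_nonneg h]
    push_cast
    rw [prod_range_cast_descFactorial]
    rw [Nat.descFactorial_eq_factorial_mul_choose]
    push_cast
    rw [mul_comm, mul_div_assoc, div_self (by positivity), mul_one]



lemma det_row_split {c : ℕ} (u v : Fin c → Fin c → ℚ) :
    Matrix.det (Matrix.of fun p q => u p q + v p q)
      = ∑ S : Finset (Fin c),
          Matrix.det (Matrix.of fun p q => if p ∈ S then u p q else v p q) := by
  classical
  have h := (Matrix.detRowAlternating :
      (Fin c → ℚ) [⋀^Fin c]→ₗ[ℚ] ℚ).toMultilinearMap.map_add_univ u v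
  have h1 : Matrix.det (Matrix.of fun p q => u p q + v p q)
      = (Matrix.detRowAlternating :
          (Fin c → ℚ) [⋀^Fin c]→ₗ[ℚ] ℚ).toMultilinearMap (u + v) := rfl
  rw [h1, h]
  refine Finset.sum_congr rfl fun S _ => ?_
  have : (S.piecewise u v) = fun p q => if p ∈ S then u p q else v p q := by
    funext p q
    by_cases hp : p ∈ S
    · rw [Finset.piecewise_eq_of_mem _ _ _ hp, if_pos hp]
    · rw [Finset.piecewise_eq_of_notMem _ _ _ hp, if_neg hp]
  rw [this]
  rfl

lemma det_expand_indicator {c : ℕ} (A : Matrix (Fin (c+1)) (Fin (c+1)) ℚ) (p₀ : Fin (c+1))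
    (h0 : ∀ p, A p 0 = if p = p₀ then 1 else 0) :
    A.det = (-1)^(p₀:ℕ) * (A.submatrix p₀.succAbove Fin.succ).det := by
  rw [Matrix.det_succ_column_zero]
  rw [Finset.sum_eq_single p₀]
  · rw [h0, if_pos rfl, mul_one]
  · intro b _ hb
    rw [h0, if_neg hb]
    ring
  · intro h
    exact absurd (Finset.mem_univ _) h

lemma le_apply_of_strictMono {c : ℕ} {r : Fin c → ℤ} (hr : StrictMono r)
    (hpos : ∀ p, 0 ≤ r p) :
    ∀ k : ℕ, ∀ h : k < c, (k : ℤ) ≤ r ⟨k, h⟩ := by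
  intro k
  induction k with
  | zero => intro h; exact hpos _
  | succ k ih =>
    intro h
    have h' : k < c := by omega
    have h2 := hr (show (⟨k, h'⟩ : Fin c) < ⟨k+1, h⟩ by simp [Fin.lt_def])
    have h3 := ih h'
    push_cast at h2 ⊢
    omega

lemma preimage_eq_self {c : ℕ} {r : Fin c → ℤ} (hr : StrictMono r) (hpos : ∀ p, 0 ≤ r p)
    {K : ℕ} (hK : ∀ k : ℕ, k < K → ∃ p, r p = k) :
    ∀ k : ℕ, k < K → ∃ h : k < c, r ⟨k, h⟩ = k := by
  intro k
  induction k using Nat.strong_induction_on with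
  | _ k ih =>
    intro hkK
    obtain ⟨p, hp⟩ := hK k hkK
    have hple : (p : ℤ) ≤ (k : ℤ) := by
      rw [← hp]
      simpa using le_apply_of_strictMono hr hpos p p.isLt
    have hkp : (k : ℤ) ≤ ((p : ℕ) : ℤ) := by
      rcases Nat.eq_zero_or_pos k with rfl | hk0
      · positivity
      · obtain ⟨h', hvk⟩ := ih (k-1) (by omega) (by omega)
        have hlt : (⟨k-1, h'⟩ : Fin c) < p := by
          refine hr.lt_iff_lt.mp ?_
          rw [hvk, hp]
          omega
        rw [Fin.lt_def] at hlt
        have hv : ((⟨k-1, h'⟩ : Fin c) : ℕ) = k - 1 := rfl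
        rw [hv] at hlt
        omega
    have hpk : (p : ℕ) = k := by omega
    have hkc : k < c := hpk ▸ p.isLt
    refine ⟨hkc, ?_⟩
    have : (⟨k, hkc⟩ : Fin c) = p := by
      apply Fin.ext
      simp [hpk]
    rw [this, hp]



noncomputable def EE (c : ℕ) (r : Fin c → ℤ) (m s : Fin c → ℕ) : ℚ :=
  (-1 : ℚ) ^ (∑ q, s q) *
    Matrix.det (Matrix.of fun p q : Fin c => ch (m q) (r p - (s q : ℤ)))

lemma EE_fin_zero (r : Fin 0 → ℤ) (m s : Fin 0 → ℕ) : EE 0 r m s = 1 := by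
  unfold EE
  rw [Matrix.det_fin_zero]
  simp

lemma EE_eq_zero_of_det {c : ℕ} {r : Fin c → ℤ} {m s : Fin c → ℕ}
    (h : Matrix.det (Matrix.of fun p q : Fin c => ch (m q) (r p - (s q : ℤ))) = 0) :
    EE c r m s = 0 := by
  unfold EE
  rw [h, mul_zero]

lemma EE_expand {c : ℕ} (r : Fin (c+1) → ℤ) (m s : Fin (c+1) → ℕ)
    (hinj : Function.Injective r) (hm0 : m 0 = 0)
    (p₀ : Fin (c+1)) (hp₀ : r p₀ = (s 0 : ℤ)) (hval : (p₀ : ℕ) = s 0) :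
    EE (c+1) r m s = EE c (r ∘ p₀.succAbove) (m ∘ Fin.succ) (s ∘ Fin.succ) := by
  unfold EE
  rw [det_expand_indicator _ p₀ ?ind]
  case ind =>
    intro p
    rw [Matrix.of_apply, hm0, ch_zero_left]
    by_cases hp : p = p₀
    · subst hp
      rw [if_pos (sub_eq_zero.mpr hp₀), if_pos rfl]
    · rw [if_neg (fun hcon => hp (hinj ((sub_eq_zero.mp hcon).trans hp₀.symm))), if_neg hp]
  have hsub : (Matrix.of fun p q : Fin (c+1) =>
        ch (m q) (r p - (s q:ℤ))).submatrix p₀.succAbove Fin.succ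
      = Matrix.of (fun p q : Fin c =>
          ch ((m ∘ Fin.succ) q) ((r ∘ p₀.succAbove) p - ((s ∘ Fin.succ) q : ℤ))) := rfl
  rw [hsub, hval, Fin.sum_univ_succ]
  have h1 : (-1:ℚ)^(s 0) * (-1:ℚ)^(s 0) = 1 := by
    rw [← pow_add]
    exact Even.neg_one_pow ⟨s 0, rfl⟩
  set D := Matrix.det (Matrix.of (fun p q : Fin c =>
      ch ((m ∘ Fin.succ) q) ((r ∘ p₀.succAbove) p - ((s ∘ Fin.succ) q : ℤ)))) with hD
  calc (-1:ℚ) ^ (s 0 + ∑ q : Fin c, s q.succ) * ((-1) ^ (s 0) * D)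
      = ((-1:ℚ)^(s 0) * (-1:ℚ)^(s 0)) * ((-1) ^ (∑ q : Fin c, s q.succ) * D) := by
        rw [pow_add]; ring
    _ = (-1) ^ (∑ q : Fin c, s q.succ) * D := by rw [h1, one_mul]
    _ = (-1) ^ (∑ q : Fin c, (s ∘ Fin.succ) q) * D := rfl

lemma EE_split {c : ℕ} (r : Fin c → ℤ) (m s : Fin c → ℕ) (hm1 : ∀ q, 1 ≤ m q) :
    EE c r m s = ∑ S : Finset (Fin c),
      EE c (fun p => if p ∈ S then r p else r p - 1) (fun q => m q - 1) s := by
  unfold EE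
  rw [← Finset.mul_sum]
  congr 1
  have hM : (Matrix.of fun p q : Fin c => ch (m q) (r p - (s q:ℤ)))
      = Matrix.of fun p q : Fin c =>
          ch (m q - 1) (r p - (s q:ℤ)) + ch (m q - 1) ((r p - 1) - (s q:ℤ)) := by
    ext p q
    rw [Matrix.of_apply, Matrix.of_apply]
    have h2 : m q - 1 + 1 = m q := Nat.sub_add_cancel (hm1 q)
    calc ch (m q) (r p - (s q:ℤ))
        = ch ((m q - 1) + 1) (r p - (s q:ℤ)) := by rw [h2]
      _ = ch (m q - 1) (r p - (s q:ℤ)) + ch (m q - 1) ((r p - (s q:ℤ)) - 1) := ch_pascal _ _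
      _ = ch (m q - 1) (r p - (s q:ℤ)) + ch (m q - 1) ((r p - 1) - (s q:ℤ)) := by
          rw [show (r p - (s q:ℤ)) - 1 = (r p - 1) - (s q:ℤ) from by ring]
  rw [hM, det_row_split]
  refine Finset.sum_congr rfl fun S _ => ?_
  congr 1
  ext p q
  by_cases hp : p ∈ S
  · simp [hp]
  · simp [hp]

lemma EE_term_nonneg {c : ℕ} (r : Fin c → ℤ) (m s : Fin c → ℕ) (S : Finset (Fin c))
    (hr : StrictMono r) (hpos : ∀ p, 0 ≤ r p)
    (hK : ∀ (q : Fin c) (k : ℕ), k < s q → ∃ p, r p = (k:ℤ))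
    (IH : ∀ (r' : Fin c → ℤ), StrictMono r' → (∀ p, 0 ≤ r' p) →
        (∀ (q : Fin c) (k : ℕ), k < s q → ∃ p, r' p = (k:ℤ)) →
        0 ≤ EE c r' (fun q => m q - 1) s) :
    0 ≤ EE c (fun p => if p ∈ S then r p else r p - 1) (fun q => m q - 1) s := by
  set r' : Fin c → ℤ := fun p => if p ∈ S then r p else r p - 1 with hr'
  have hub : ∀ p, r' p ≤ r p := by
    intro p
    by_cases hp : p ∈ S <;> simp [hr', hp]
  have hlb : ∀ p, r p - 1 ≤ r' p := by
    intro p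
    by_cases hp : p ∈ S <;> simp [hr', hp]
  have hmono : ∀ a b : Fin c, a < b → r' a ≤ r' b := by
    intro a b hab
    have h1 := hub a
    have h2 := hlb b
    have h3 := hr hab
    omega
  by_cases hneg : ∃ p, r' p < 0
  · obtain ⟨p, hp⟩ := hneg
    apply le_of_eq
    symm
    apply EE_eq_zero_of_det
    apply Matrix.det_eq_zero_of_row_eq_zero p
    intro q
    rw [Matrix.of_apply, ch_of_neg (by have := Int.natCast_nonneg (s q); omega)]
  by_cases hsm : StrictMono r'
  · push_neg at hneg
    apply IH r' hsm hneg
    intro q k hk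
    -- show r' ⟨k⟩ = k
    suffices h : ∀ j : ℕ, j < s q → ∃ hj : j < c, r' ⟨j, hj⟩ = j by
      obtain ⟨hj, hval⟩ := h k hk
      exact ⟨⟨k, hj⟩, hval⟩
    intro j
    induction j using Nat.strong_induction_on with
    | _ j ihj =>
      intro hjs
      obtain ⟨hjc, hrj⟩ := preimage_eq_self hr hpos (hK q) j hjs
      refine ⟨hjc, ?_⟩
      have hj1 : r' ⟨j, hjc⟩ ≤ j := by
        have := hub ⟨j, hjc⟩
        omega
      rcases Nat.eq_zero_or_pos j with rfl | hj0
      · have := hneg ⟨0, hjc⟩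
        omega
      · obtain ⟨hjc', hval'⟩ := ihj (j-1) (by omega) (by omega)
        have hlt : r' ⟨j-1, hjc'⟩ < r' ⟨j, hjc⟩ := hsm (by simp [Fin.lt_def]; omega)
        rw [hval'] at hlt
        have := hlb ⟨j, hjc⟩
        omega
  · -- non strict: adjacent equal rows
    rw [StrictMono] at hsm
    push_neg at hsm
    obtain ⟨a, b, hab, hba⟩ := hsm
    have heq : r' a = r' b := le_antisymm (hmono a b hab) hba
    apply le_of_eq
    symm
    apply EE_eq_zero_of_det
    apply Matrix.det_zero_of_row_eq (ne_of_lt hab)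
    funext q
    rw [Matrix.of_apply, Matrix.of_apply, heq]

lemma sum_sub_one {c : ℕ} (m : Fin c → ℕ) (hm1 : ∀ q, 1 ≤ m q) :
    ∑ q, m q = (∑ q, (m q - 1)) + c := by
  have : ∀ q : Fin c, m q = (m q - 1) + 1 := fun q => (Nat.sub_add_cancel (hm1 q)).symm
  calc ∑ q, m q = ∑ q : Fin c, ((m q - 1) + 1) := Finset.sum_congr rfl (fun q _ => this q)
    _ = (∑ q, (m q - 1)) + c := by
        rw [Finset.sum_add_distrib]
        simp

lemma EE_nonneg : ∀ (n c : ℕ) (r : Fin c → ℤ) (m s : Fin c → ℕ),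
    c + ∑ q, m q ≤ n → StrictMono r → StrictMono m → Antitone s →
    (∀ (q : Fin c) (k : ℕ), k < s q → ∃ p, r p = (k:ℤ)) →
    0 ≤ EE c r m s := by
  intro n
  induction n with
  | zero =>
    intro c r m s hn _ _ _ _
    have hc : c = 0 := by omega
    subst hc
    rw [EE_fin_zero]
    norm_num
  | succ n IH =>
    intro c r m s hn hr hm hs hK
    match c with
    | 0 =>
      rw [EE_fin_zero]
      norm_num
    | c' + 1 =>
      by_cases hneg : ∃ p, r p < 0
      · obtain ⟨p, hp⟩ := hneg
        apply le_of_eq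
        symm
        apply EE_eq_zero_of_det
        apply Matrix.det_eq_zero_of_row_eq_zero p
        intro q
        rw [Matrix.of_apply, ch_of_neg (by have := Int.natCast_nonneg (s q); omega)]
      push_neg at hneg
      by_cases hm0 : m 0 = 0
      · by_cases hs0 : ∃ p, r p = ((s 0 : ℕ) : ℤ)
        · have hK' : ∀ k : ℕ, k < s 0 + 1 → ∃ p, r p = (k:ℤ) := by
            intro k hk
            rcases Nat.lt_or_ge k (s 0) with h | h
            · exact hK 0 k h
            · have : k = s 0 := by omega
              subst this
              exact hs0
          obtain ⟨hlt, hval⟩ := preimage_eq_self hr hneg hK' (s 0) (by omega)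
          rw [EE_expand r m s hr.injective hm0 ⟨s 0, hlt⟩ hval rfl]
          apply IH
          · have h1 : ∑ q : Fin (c'+1), m q = m 0 + ∑ q : Fin c', m q.succ :=
              Fin.sum_univ_succ m
            have : ∑ q : Fin c', (m ∘ Fin.succ) q = ∑ q : Fin c', m q.succ := rfl
            rw [this]
            omega
          · exact hr.comp (Fin.strictMono_succAbove _)
          · exact hm.comp Fin.strictMono_succ
          · intro a b hab
            exact hs (by simpa using Fin.strictMono_succ.monotone hab)
          · intro q k hk
            have hks0 : k < s 0 := lt_of_lt_of_le hk (hs (Fin.zero_le _))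
            obtain ⟨hkc, hkval⟩ := preimage_eq_self hr hneg (hK 0) k hks0
            have hkc' : k < c' := by omega
            refine ⟨⟨k, hkc'⟩, ?_⟩
            have hsa : (⟨s 0, hlt⟩ : Fin (c'+1)).succAbove ⟨k, hkc'⟩
                = (⟨k, hkc⟩ : Fin (c'+1)) := by
              rw [Fin.succAbove_of_castSucc_lt]
              · rfl
              · simp only [Fin.lt_def, Fin.coe_castSucc]
                exact hks0
            show r ((⟨s 0, hlt⟩ : Fin (c'+1)).succAbove ⟨k, hkc'⟩) = (k:ℤ)
            rw [hsa, hkval]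
        · push_neg at hs0
          apply le_of_eq
          symm
          apply EE_eq_zero_of_det
          apply Matrix.det_eq_zero_of_column_eq_zero 0
          intro p
          rw [Matrix.of_apply, hm0, ch_zero_left, if_neg]
          intro hcon
          exact hs0 p (by omega)
      · have hm1 : ∀ q, 1 ≤ m q := by
          intro q
          have := hm.monotone (Fin.zero_le q)
          omega
        rw [EE_split r m s hm1]
        apply Finset.sum_nonneg
        intro S _
        apply EE_term_nonneg r m s S hr hneg hK
        intro r' hr' hpos' hK'
        apply IH
        · show c' + 1 + ∑ q : Fin (c'+1), (m q - 1) ≤ n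
          have := sum_sub_one m hm1
          omega
        · exact hr'
        · intro a b hab
          show m a - 1 < m b - 1
          have h1 := hm hab
          have h2 := hm1 a
          omega
        · exact hs
        · exact hK'

lemma EE_bridge {c : ℕ} (r : Fin c → ℤ) (m s : Fin c → ℕ) (S : Finset (Fin c))
    (hr : StrictMono r) (hpos : ∀ p, 0 ≤ r p) (hm : StrictMono m) (hm1 : ∀ q, 1 ≤ m q)
    (hs : Antitone s) (hK : ∀ (q : Fin c) (k : ℕ), k < s q → ∃ p, r p = (k:ℤ)) :
    EE c (fun p => if p ∈ S then r p else r p - 1) (fun q => m q - 1) s ≤ EE c r m s := by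
  rw [EE_split r m s hm1]
  have hterm : ∀ S' : Finset (Fin c),
      0 ≤ EE c (fun p => if p ∈ S' then r p else r p - 1) (fun q => m q - 1) s := by
    intro S'
    apply EE_term_nonneg r m s S' hr hpos hK
    intro r' hr' hpos' hK'
    apply EE_nonneg (c + ∑ q, (m q - 1)) c r' (fun q => m q - 1) s le_rfl hr' _ hs hK'
    intro a b hab
    show m a - 1 < m b - 1
    have h1 := hm hab
    have h2 := hm1 a
    omega
  exact Finset.single_le_sum (fun S' _ => hterm S') (Finset.mem_univ S)

lemma EE_pos : ∀ (n c : ℕ) (m s : Fin c → ℕ),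
    c + ∑ q, m q ≤ n → StrictMono m → Antitone s →
    (∀ q : Fin c, s q + (q : ℕ) < c) →
    0 < EE c (fun p => ((p : ℕ) : ℤ)) m s := by
  intro n
  induction n with
  | zero =>
    intro c m s hn _ _ _
    have hc : c = 0 := by omega
    subst hc
    rw [EE_fin_zero]
    norm_num
  | succ n IH =>
    intro c m s hn hm hs hsq
    match c with
    | 0 =>
      rw [EE_fin_zero]
      norm_num
    | c' + 1 =>
      have hr : StrictMono (fun p : Fin (c'+1) => ((p:ℕ):ℤ)) := by
        intro a b hab
        show ((a:ℕ):ℤ) < ((b:ℕ):ℤ)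
        have : (a:ℕ) < (b:ℕ) := hab
        omega
      have hpos : ∀ p : Fin (c'+1), (0:ℤ) ≤ ((p:ℕ):ℤ) := fun p => Int.natCast_nonneg _
      have hK : ∀ (q : Fin (c'+1)) (k : ℕ), k < s q → ∃ p : Fin (c'+1), ((p:ℕ):ℤ) = (k:ℤ) := by
        intro q k hk
        have h1 : s q + (q:ℕ) < c' + 1 := hsq q
        exact ⟨⟨k, by omega⟩, rfl⟩
      by_cases hm0 : m 0 = 0
      · have hs0c : s 0 < c' + 1 := by
          have h1 : s 0 + ((0 : Fin (c'+1)):ℕ) < c' + 1 := hsq 0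
          simpa using h1
        rw [EE_expand _ m s hr.injective hm0 ⟨s 0, hs0c⟩ rfl rfl]
        rcases Nat.eq_zero_or_pos c' with rfl | hc'
        · rw [EE_fin_zero]
          norm_num
        · -- bridge: descend the hole
          set r1 : Fin c' → ℤ := (fun p : Fin (c'+1) => ((p:ℕ):ℤ)) ∘
              (⟨s 0, hs0c⟩ : Fin (c'+1)).succAbove with hr1def
          have hr1 : StrictMono r1 := hr.comp (Fin.strictMono_succAbove _)
          have hr1pos : ∀ p, 0 ≤ r1 p := fun p => Int.natCast_nonneg _
          have hm1 : StrictMono (m ∘ Fin.succ) := hm.comp Fin.strictMono_succ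
          have hm1ge : ∀ q : Fin c', 1 ≤ (m ∘ Fin.succ) q := by
            intro q
            have h1 : m 0 < m q.succ := hm (Fin.succ_pos q)
            show 1 ≤ m q.succ
            omega
          have hs1 : Antitone (s ∘ Fin.succ) := by
            intro a b hab
            exact hs (by simpa using Fin.strictMono_succ.monotone hab)
          have hK1 : ∀ (q : Fin c') (k : ℕ), k < (s ∘ Fin.succ) q → ∃ p, r1 p = (k:ℤ) := by
            intro q k hk
            have hks0 : k < s 0 := lt_of_lt_of_le hk (hs (Fin.zero_le _))
            have hkc' : k < c' := by omega
            refine ⟨⟨k, hkc'⟩, ?_⟩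
            have hsa : (⟨s 0, hs0c⟩ : Fin (c'+1)).succAbove ⟨k, hkc'⟩
                = (⟨k, by omega⟩ : Fin (c'+1)) := by
              rw [Fin.succAbove_of_castSucc_lt]
              · rfl
              · simp only [Fin.lt_def, Fin.coe_castSucc]
                exact hks0
            show (((( ⟨s 0, hs0c⟩ : Fin (c'+1)).succAbove ⟨k, hkc'⟩ : Fin (c'+1)) : ℕ) : ℤ) = (k:ℤ)
            rw [hsa]
          set Sd : Finset (Fin c') := Finset.univ.filter (fun p => (p:ℕ) < s 0) with hSd
          have hb := EE_bridge r1 (m ∘ Fin.succ) (s ∘ Fin.succ) Sd hr1 hr1pos hm1 hm1ge hs1 hK1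
          have hdesc : (fun p => if p ∈ Sd then r1 p else r1 p - 1)
              = fun p : Fin c' => ((p:ℕ):ℤ) := by
            funext p
            by_cases hp : (p:ℕ) < s 0
            · rw [if_pos (by simp [hSd, hp])]
              show ((((⟨s 0, hs0c⟩ : Fin (c'+1)).succAbove p : Fin (c'+1)) : ℕ) : ℤ) = ((p:ℕ):ℤ)
              rw [Fin.succAbove_of_castSucc_lt _ _ (by simp only [Fin.lt_def, Fin.coe_castSucc]; exact hp)]
              rfl
            · rw [if_neg (by simp [hSd, hp])]
              show ((((⟨s 0, hs0c⟩ : Fin (c'+1)).succAbove p : Fin (c'+1)) : ℕ) : ℤ) - 1 = ((p:ℕ):ℤ)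
              rw [Fin.succAbove_of_le_castSucc _ _ (by have hg : ((⟨s 0, hs0c⟩ : Fin (c'+1)) : ℕ) = s 0 := rfl; rw [Fin.le_def, Fin.coe_castSucc, hg]; omega)]
              show (((p:ℕ) + 1 : ℕ) : ℤ) - 1 = ((p:ℕ):ℤ)
              push_cast
              ring
          rw [hdesc] at hb
          refine lt_of_lt_of_le ?_ hb
          apply IH
          · show c' + ∑ q : Fin c', ((m ∘ Fin.succ) q - 1) ≤ n
            have hgsum := sum_sub_one (m ∘ Fin.succ) hm1ge
            have hsum2 : ∑ q : Fin (c'+1), m q = m 0 + ∑ q : Fin c', m q.succ :=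
              Fin.sum_univ_succ m
            have : ∑ q : Fin c', (m ∘ Fin.succ) q = ∑ q : Fin c', m q.succ := rfl
            omega
          · intro a b hab
            show m a.succ - 1 < m b.succ - 1
            have h1 := hm1 hab
            have h2 := hm1ge a
            simp only [Function.comp] at h1 h2
            omega
          · exact hs1
          · intro q
            have := hsq q.succ
            simp only [Function.comp]
            rw [Fin.val_succ] at this
            omega
      · have hm1 : ∀ q, 1 ≤ m q := by
          intro q
          have := hm.monotone (Fin.zero_le q)
          omega
        have hb := EE_bridge _ m s Finset.univ hr hpos hm hm1 hs hK
        have hdesc : (fun p : Fin (c'+1) => if p ∈ Finset.univ then ((p:ℕ):ℤ) else ((p:ℕ):ℤ) - 1)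
            = fun p : Fin (c'+1) => ((p:ℕ):ℤ) := by
          funext p
          rw [if_pos (Finset.mem_univ p)]
        rw [hdesc] at hb
        refine lt_of_lt_of_le ?_ hb
        apply IH
        · show c' + 1 + ∑ q : Fin (c'+1), (m q - 1) ≤ n
          have := sum_sub_one m hm1
          omega
        · intro a b hab
          show m a - 1 < m b - 1
          have h1 := hm hab
          have h2 := hm1 a
          omega
        · exact hs
        · exact hsq


end SchubertAux

open SchubertAux in
/-- The determinantal multiplicity `M_j(i)` is a positive integer. -/
theorem multiplicity_pos_integer {d n : ℕ} (j i : Fin d → ℕ)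
    (hj : StrictMono j) (hi : StrictMono i)
    (hj1 : ∀ q, 1 ≤ j q) (hin : ∀ q, i q ≤ n) (hji : ∀ q, j q ≤ i q) :
    ∃ m : ℕ, 0 < m ∧
      (-1 : ℚ) ^ (∑ q, sVec j i q) *
        Matrix.det (Matrix.of fun p q : Fin d =>
          intChoose (i q) (((p : ℕ) : ℤ) - (sVec j i q : ℤ))) = m := by
  classical
  set s : Fin d → ℕ := sVec j i with hs_def
  -- rewrite intChoose as ch
  have hM : (Matrix.of fun p q : Fin d =>
        intChoose (i q) (((p : ℕ) : ℤ) - (s q : ℤ)))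
      = Matrix.of (fun p q : Fin d =>
          ch (i q) ((fun p : Fin d => ((p:ℕ):ℤ)) p - (s q : ℤ))) := by
    ext p q
    rw [Matrix.of_apply, Matrix.of_apply, intChoose_natCast]
  -- the ℤ matrix
  set MZ : Matrix (Fin d) (Fin d) ℤ :=
    Matrix.of (fun p q : Fin d => chZ (i q) (((p:ℕ):ℤ) - (s q : ℤ))) with hMZ
  have hcast : (Int.castRingHom ℚ).mapMatrix MZ
      = Matrix.of (fun p q : Fin d =>
          ch (i q) ((fun p : Fin d => ((p:ℕ):ℤ)) p - (s q : ℤ))) := by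
    ext p q
    rfl
  -- positivity
  have hpos : 0 < EE d (fun p => ((p:ℕ):ℤ)) i s := by
    apply EE_pos (d + ∑ q, i q) d i s le_rfl hi
    · -- antitone
      intro a b hab
      apply Finset.card_le_card
      intro p hp
      rw [Finset.mem_filter] at hp ⊢
      exact ⟨hp.1, lt_of_le_of_lt (hi.monotone hab) hp.2⟩
    · -- s q + q < d
      intro q
      have hsub : (Finset.univ.filter fun p : Fin d => i q < j p) ⊆ Finset.Ioi q := by
        intro p hp
        rw [Finset.mem_filter] at hp
        rw [Finset.mem_Ioi]
        by_contra hle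
        push_neg at hle
        have h1 : j p ≤ i p := hji p
        have h2 : i p ≤ i q := hi.monotone hle
        omega
      have hcard : s q ≤ (Finset.Ioi q).card := Finset.card_le_card hsub
      rw [Fin.card_Ioi] at hcard
      have hq : (q:ℕ) < d := q.isLt
      omega
  -- EE is the target expression
  have hEE : EE d (fun p => ((p:ℕ):ℤ)) i s
      = (-1 : ℚ) ^ (∑ q, s q) *
        Matrix.det (Matrix.of fun p q : Fin d =>
          intChoose (i q) (((p : ℕ) : ℤ) - (s q : ℤ))) := by
    rw [hM]
    rfl
  set z : ℤ := (-1) ^ (∑ q, s q) * MZ.det with hz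
  have hzq : ((z : ℤ) : ℚ) = EE d (fun p => ((p:ℕ):ℤ)) i s := by
    rw [hz, hEE, hM]
    push_cast
    congr 1
  have hz0 : 0 < z := by
    have : (0:ℚ) < (z:ℚ) := by rw [hzq]; exact hpos
    exact_mod_cast this
  refine ⟨z.toNat, by omega, ?_⟩
  rw [← hEE, ← hzq]
  congr 1
  omega
end
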